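/- Under the ellipsoidal-coordinate setup, assume in addition that reals c_1, …, c_{n−1} are given, that for every t ∈ I each λ_k(t) is nonzero, that w_1, …, w_n : I → ℝ satisfy w_k(t)² = −λ_k(t) · ∏_{i=1}^{n+1}(λ_k(t) − a_i) · ∏_{l=1}^{n−1}(λ_k(t) − c_l), and that the Dubrovin equations hold: λ̇_k(t) = −2 w_k(t) / ( λ_k(t) · ∏_{j≠k}(λ_k(t) − λ_j(t)) ) for every k and t. Then the motion has unit speed: Σ_{i=1}^{n+1} (ẋ_i(t))² = 1 for every t ∈ I. -/

import Mathlib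

/-!
Writing `ρᵢ = xᵢ²`, one has `ẋᵢ² = ρ̇ᵢ² / (4ρᵢ)` and `ρ̇ᵢ = -ρᵢ Σₖ λ̇ₖ / (aᵢ - λₖ)`, so `Σᵢ ẋᵢ²` is a
quadratic form in the `λ̇ₖ` with coefficients `Σᵢ ρᵢ / ((aᵢ - λₖ)(aᵢ - λₗ))`. Lagrange interpolation
at the nodes `aᵢ` of `X ∏_{m ≠ k} (X - λₘ)` (its leading coefficient, and its partial fraction
expansion at `X = λₖ`) shows that the form is diagonal with entries
`-λₖ ∏_{j ≠ k} (λₖ - λⱼ) / ∏ᵢ (λₖ - aᵢ)`. The Dubrovin equations turn the `k`-th term into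
`∏ₗ (λₖ - cₗ) / ∏_{j ≠ k} (λₖ - λⱼ)`, and by interpolation at the nodes `λₖ` these sum to the
leading coefficient of the monic polynomial `∏ₗ (X - cₗ)` of degree `n - 1`, which is `1`.
-/

open Finset Polynomial

namespace Lagrange

variable {F ι : Type*} [Field F] [DecidableEq ι] {s : Finset ι} {v : ι → F}

theorem eval_div_eval_nodal_eq_sum (hvs : Set.InjOn v s) {P : F[X]} (hP : P.degree < #s)
    {x : F} (hx : ∀ i ∈ s, x ≠ v i) :
    P.eval x / (nodal s v).eval x =
      ∑ i ∈ s, P.eval (v i) / ((x - v i) * ∏ j ∈ s.erase i, (v i - v j)) := by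
  conv_lhs => rw [eq_interpolate hvs hP, eval_interpolate_not_at_node _ hx,
    mul_div_cancel_left₀ _ (eval_nodal_not_at_node hx)]
  refine sum_congr rfl fun i _ => ?_
  rw [nodalWeight, prod_inv_distrib, div_eq_mul_inv, mul_inv]
  ring

end Lagrange

section EllipsoidalCoordinates

variable {K ι κ : Type*} [Field K] [Fintype ι] [Fintype κ] [DecidableEq ι] {μ : ι → K}

theorem natDegree_X_mul_nodal_erase (k : ι) :
    (X * Lagrange.nodal (univ.erase k) μ).natDegree = Fintype.card ι := by
  have : 0 < Fintype.card ι := Fintype.card_pos_iff.2 ⟨k⟩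
  rw [monic_X.natDegree_mul Lagrange.nodal_monic, natDegree_X, Lagrange.natDegree_nodal,
    card_erase_of_mem (mem_univ k), card_univ]
  omega

theorem degree_X_mul_nodal_erase_lt (hcard : Fintype.card κ = Fintype.card ι + 1) (k : ι) :
    (X * Lagrange.nodal (univ.erase k) μ).degree < (#(univ : Finset κ) : WithBot ℕ) := by
  rw [degree_eq_natDegree (monic_X.mul Lagrange.nodal_monic).ne_zero,
    natDegree_X_mul_nodal_erase, card_univ, hcard]
  exact_mod_cast Nat.lt_succ_self _

variable [DecidableEq κ]

/-- The squared Cartesian coordinate `xᵢ² = ρᵢ` of the point with ellipsoidal coordinates `μ`. -/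
def ellipsoidalWeight (a : κ → K) (μ : ι → K) (i : κ) : K :=
  a i * (∏ k, (a i - μ k)) / (∏ j ∈ univ.erase i, (a i - a j))

variable {a : κ → K}

theorem ellipsoidalWeight_div_sub {i : κ} {k : ι} (h : a i ≠ μ k) :
    ellipsoidalWeight a μ i / (a i - μ k) =
      (X * Lagrange.nodal (univ.erase k) μ).eval (a i) / ∏ j ∈ univ.erase i, (a i - a j) := by
  rw [ellipsoidalWeight, eval_mul, eval_X, Lagrange.eval_nodal,
    ← mul_prod_erase univ _ (mem_univ k)]
  field_simp [sub_ne_zero.2 h]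

theorem sum_ellipsoidalWeight_div_sub (ha : Function.Injective a)
    (hcard : Fintype.card κ = Fintype.card ι + 1) (hμa : ∀ k i, μ k ≠ a i) (k : ι) :
    ∑ i, ellipsoidalWeight a μ i / (a i - μ k) = 1 := by
  have hcoeff := Lagrange.coeff_eq_sum ha.injOn (degree_X_mul_nodal_erase_lt (μ := μ) hcard k)
  rw [card_univ, hcard, Nat.add_sub_cancel, ← natDegree_X_mul_nodal_erase (μ := μ) k,
    (monic_X.mul Lagrange.nodal_monic).coeff_natDegree] at hcoeff
  rw [hcoeff]
  exact sum_congr rfl fun i _ => ellipsoidalWeight_div_sub (hμa k i).symm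

theorem sum_ellipsoidalWeight_div_sub_mul_sub (ha : Function.Injective a)
    (hcard : Fintype.card κ = Fintype.card ι + 1) (hμa : ∀ k i, μ k ≠ a i) {k l : ι}
    (hkl : μ k ≠ μ l) :
    ∑ i, ellipsoidalWeight a μ i / ((a i - μ k) * (a i - μ l)) = 0 := by
  have partial_fractions : ∀ i,
      (μ k - μ l) * (ellipsoidalWeight a μ i / ((a i - μ k) * (a i - μ l))) =
        ellipsoidalWeight a μ i / (a i - μ k) - ellipsoidalWeight a μ i / (a i - μ l) := fun i => by
    field_simp [sub_ne_zero.2 (hμa k i).symm, sub_ne_zero.2 (hμa l i).symm]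
    ring
  refine (mul_eq_zero.1 ?_).resolve_left (sub_ne_zero.2 hkl)
  simp only [mul_sum, partial_fractions, sum_sub_distrib,
    sum_ellipsoidalWeight_div_sub ha hcard hμa, sub_self]

theorem sum_ellipsoidalWeight_div_sub_sq (ha : Function.Injective a)
    (hcard : Fintype.card κ = Fintype.card ι + 1) (hμa : ∀ k i, μ k ≠ a i) (k : ι) :
    ∑ i, ellipsoidalWeight a μ i / (a i - μ k) ^ 2 =
      -(μ k * ∏ j ∈ univ.erase k, (μ k - μ j)) / ∏ i, (μ k - a i) := by
  have h := Lagrange.eval_div_eval_nodal_eq_sum ha.injOn (degree_X_mul_nodal_erase_lt (μ := μ) hcard k)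
    fun i _ => hμa k i
  rw [eval_mul, eval_X, Lagrange.eval_nodal, Lagrange.eval_nodal] at h
  rw [neg_div, h, ← sum_neg_distrib]
  refine sum_congr rfl fun i _ => ?_
  rw [sq, ← div_div, ellipsoidalWeight_div_sub (hμa k i).symm]
  field_simp [sub_ne_zero.2 (hμa k i), sub_ne_zero.2 (hμa k i).symm]
  ring

theorem sum_prod_sub_div_prod_erase_sub {ν : Type*} [Fintype ν] (hμ : Function.Injective μ)
    (c : ν → K) (hcard : Fintype.card ν + 1 = Fintype.card ι) :
    ∑ k, (∏ l, (μ k - c l)) / ∏ j ∈ univ.erase k, (μ k - μ j) = 1 := by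
  have hdeg : (Lagrange.nodal univ c).degree < (#(univ : Finset ι) : WithBot ℕ) := by
    rw [Lagrange.degree_nodal, card_univ, card_univ, ← hcard]
    exact_mod_cast Nat.lt_succ_self _
  have hcoeff := Lagrange.coeff_eq_sum hμ.injOn hdeg
  rw [card_univ, ← hcard, Nat.add_sub_cancel, ← card_univ, ← Lagrange.natDegree_nodal (v := c),
    Lagrange.nodal_monic.coeff_natDegree] at hcoeff
  simp only [hcoeff, Lagrange.eval_nodal]

theorem sum_ellipsoidalWeight_mul_sq_sum_div_sub (ha : Function.Injective a)
    (hcard : Fintype.card κ = Fintype.card ι + 1) (hμa : ∀ k i, μ k ≠ a i)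
    (hμ : Function.Injective μ) (u : ι → K) :
    ∑ i, ellipsoidalWeight a μ i * (∑ k, u k / (a i - μ k)) ^ 2 =
      ∑ k, u k ^ 2 * ∑ i, ellipsoidalWeight a μ i / (a i - μ k) ^ 2 := by
  set ρ := ellipsoidalWeight a μ
  calc ∑ i, ρ i * (∑ k, u k / (a i - μ k)) ^ 2
      = ∑ i, ∑ k, ∑ l, u k * u l * (ρ i / ((a i - μ k) * (a i - μ l))) := by
        refine sum_congr rfl fun i _ => ?_
        rw [sq, sum_mul_sum, mul_sum]
        refine sum_congr rfl fun k _ => ?_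
        rw [mul_sum]
        refine sum_congr rfl fun l _ => ?_
        rw [div_mul_div_comm]
        ring
    _ = ∑ k, ∑ l, u k * u l * ∑ i, ρ i / ((a i - μ k) * (a i - μ l)) := by
        rw [sum_comm]
        simp only [mul_sum]
        exact sum_congr rfl fun k _ => sum_comm
    _ = ∑ k, u k * u k * ∑ i, ρ i / ((a i - μ k) * (a i - μ k)) :=
        sum_congr rfl fun k _ => sum_eq_single k (fun l _ hlk => by
          rw [sum_ellipsoidalWeight_div_sub_mul_sub ha hcard hμa (hμ.ne hlk.symm), mul_zero])
          (fun hk => absurd (mem_univ k) hk)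
    _ = ∑ k, u k ^ 2 * ∑ i, ρ i / (a i - μ k) ^ 2 := by simp only [sq]

end EllipsoidalCoordinates

section Derivatives

variable {𝕜 ι κ : Type*} [NontriviallyNormedField 𝕜] [Fintype ι] [Fintype κ] [DecidableEq ι]
  [DecidableEq κ]

theorem hasDerivAt_ellipsoidalWeight (a : κ → 𝕜) {μ : ι → 𝕜 → 𝕜} {μ' : ι → 𝕜} {t : 𝕜}
    (hμ : ∀ k, HasDerivAt (μ k) (μ' k) t) (hμa : ∀ k i, μ k t ≠ a i) (i : κ) :
    HasDerivAt (fun s => ellipsoidalWeight a (fun k => μ k s) i)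
      (-(ellipsoidalWeight a (fun k => μ k t) i * ∑ k, μ' k / (a i - μ k t))) t := by
  have h := ((HasDerivAt.fun_finsetProd (u := univ) fun k _ => (hμ k).const_sub (a i)).const_mul
    (a i)).div_const (∏ j ∈ univ.erase i, (a i - a j))
  simp only [smul_eq_mul] at h
  refine h.congr_deriv ?_
  rw [ellipsoidalWeight, mul_sum, sum_div, mul_sum, ← sum_neg_distrib]
  refine sum_congr rfl fun k _ => ?_
  rw [← mul_prod_erase univ _ (mem_univ k)]
  field_simp [sub_ne_zero.2 (hμa k i).symm]

end Derivatives

theorem sq_of_hasDerivAt_sqrt {f : ℝ → ℝ} {f' g' t : ℝ} (hf : HasDerivAt f f' t) (hft : 0 < f t)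
    (hg : HasDerivAt (fun s => √(f s)) g' t) : g' ^ 2 = f' ^ 2 / (4 * f t) := by
  rw [hg.unique (hf.sqrt hft.ne'), div_pow, mul_pow, Real.sq_sqrt hft.le]
  norm_num

theorem sq_of_hasDerivAt_sqrt_ellipsoidalWeight {ι κ : Type*} [Fintype ι] [Fintype κ]
    [DecidableEq ι] [DecidableEq κ] (a : κ → ℝ) {μ : ι → ℝ → ℝ} {μ' : ι → ℝ} {t x' : ℝ}
    (hμ : ∀ k, HasDerivAt (μ k) (μ' k) t) (hμa : ∀ k i, μ k t ≠ a i) {i : κ}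
    (hpos : 0 < ellipsoidalWeight a (fun k => μ k t) i)
    (hx : HasDerivAt (fun s => √(ellipsoidalWeight a (fun k => μ k s) i)) x' t) :
    x' ^ 2 = ellipsoidalWeight a (fun k => μ k t) i * (∑ k, μ' k / (a i - μ k t)) ^ 2 / 4 := by
  rw [sq_of_hasDerivAt_sqrt (hasDerivAt_ellipsoidalWeight a hμ hμa i) hpos hx]
  field_simp

theorem dubrovin_unit_speed_general (n : ℕ) (hn : 1 ≤ n)
    (a : Fin (n + 1) → ℝ) (ha_inj : Function.Injective a)
    (c : Fin (n - 1) → ℝ)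
    (p q : ℝ) (lam lamdot : Fin n → ℝ → ℝ) (w : Fin n → ℝ → ℝ)
    (x xdot : Fin (n + 1) → ℝ → ℝ)
    (hlam_distinct : ∀ t ∈ Set.Ioo p q, ∀ k l : Fin n, k ≠ l → lam k t ≠ lam l t)
    (hlam_ne_a : ∀ t ∈ Set.Ioo p q, ∀ k : Fin n, ∀ j : Fin (n + 1), lam k t ≠ a j)
    (hlam_ne_zero : ∀ t ∈ Set.Ioo p q, ∀ k : Fin n, lam k t ≠ 0)
    (hrho_pos : ∀ t ∈ Set.Ioo p q, ∀ i : Fin (n + 1),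
      0 < a i * (∏ k, (a i - lam k t)) / (∏ j ∈ univ.erase i, (a i - a j)))
    (hx : ∀ t : ℝ, ∀ i : Fin (n + 1), x i t =
      Real.sqrt (a i * (∏ k, (a i - lam k t)) / (∏ j ∈ univ.erase i, (a i - a j))))
    (hlam_deriv : ∀ t ∈ Set.Ioo p q, ∀ k : Fin n, HasDerivAt (lam k) (lamdot k t) t)
    (hx_deriv : ∀ t ∈ Set.Ioo p q, ∀ i : Fin (n + 1), HasDerivAt (x i) (xdot i t) t)
    (hw : ∀ t ∈ Set.Ioo p q, ∀ k : Fin n,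
      (w k t) ^ 2 = -(lam k t * (∏ i, (lam k t - a i)) * (∏ l, (lam k t - c l))))
    (hdubrovin : ∀ t ∈ Set.Ioo p q, ∀ k : Fin n,
      lamdot k t = -2 * w k t / (lam k t * ∏ j ∈ univ.erase k, (lam k t - lam j t))) :
    ∀ t ∈ Set.Ioo p q, ∑ i, (xdot i t) ^ 2 = 1 := by
  intro t ht
  set μ : Fin n → ℝ := fun k => lam k t
  have hμa : ∀ k i, μ k ≠ a i := hlam_ne_a t ht
  have hμ : Function.Injective μ := fun k l h => by_contra fun hkl => hlam_distinct t ht k l hkl h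
  have hcard : Fintype.card (Fin (n + 1)) = Fintype.card (Fin n) + 1 := by simp
  have hspeed : ∀ i, xdot i t ^ 2 =
      ellipsoidalWeight a μ i * (∑ k, lamdot k t / (a i - μ k)) ^ 2 / 4 := by
    intro i
    have hxi : x i = fun s => √(ellipsoidalWeight a (fun k => lam k s) i) :=
      funext fun s => hx s i
    exact sq_of_hasDerivAt_sqrt_ellipsoidalWeight a (hlam_deriv t ht) hμa (hrho_pos t ht i)
      (hxi ▸ hx_deriv t ht i)
  have hkinetic : ∀ k, lamdot k t ^ 2 *
      (-(μ k * ∏ j ∈ univ.erase k, (μ k - μ j)) / ∏ i, (μ k - a i)) / 4 =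
        (∏ l, (μ k - c l)) / ∏ j ∈ univ.erase k, (μ k - μ j) := by
    intro k
    have hG : ∏ j ∈ univ.erase k, (lam k t - lam j t) ≠ 0 := prod_ne_zero_iff.2 fun j hj =>
      sub_ne_zero.2 (hlam_distinct t ht k j (ne_of_mem_erase hj).symm)
    have hM : ∏ i, (lam k t - a i) ≠ 0 :=
      prod_ne_zero_iff.2 fun i _ => sub_ne_zero.2 (hlam_ne_a t ht k i)
    simp only [μ]
    rw [hdubrovin t ht k, div_pow, mul_pow, hw t ht k]
    field_simp [hlam_ne_zero t ht k]
    ring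
  calc ∑ i, xdot i t ^ 2
      = (∑ i, ellipsoidalWeight a μ i * (∑ k, lamdot k t / (a i - μ k)) ^ 2) / 4 := by
        rw [sum_div]
        exact sum_congr rfl fun i _ => hspeed i
    _ = ∑ k, lamdot k t ^ 2 * (∑ i, ellipsoidalWeight a μ i / (a i - μ k) ^ 2) / 4 := by
        rw [sum_ellipsoidalWeight_mul_sq_sum_div_sub ha_inj hcard hμa hμ, sum_div]
    _ = ∑ k, (∏ l, (μ k - c l)) / ∏ j ∈ univ.erase k, (μ k - μ j) := by
        refine sum_congr rfl fun k _ => ?_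
        rw [sum_ellipsoidalWeight_div_sub_sq ha_inj hcard hμa, hkinetic]
    _ = 1 := sum_prod_sub_div_prod_erase_sub hμ c (by simp; omega)

/-- Unit-speed normalization for solutions of the Dubrovin equations: with
`xᵢ(t) = √ρᵢ(t)`, `wₖ² = −λₖ ∏ᵢ(λₖ−aᵢ) ∏ₗ(λₖ−cₗ)` and
`λ̇ₖ = −2wₖ / (λₖ ∏_{j≠k}(λₖ−λⱼ))`, one has `Σᵢ ẋᵢ² = 1`. -/
theorem dubrovin_unit_speed (n : ℕ) (hn : 1 ≤ n)
    (a : Fin (n + 1) → ℝ) (ha_pos : ∀ i, 0 < a i) (ha_inj : Function.Injective a)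
    (c : Fin (n - 1) → ℝ)
    (p q : ℝ) (lam lamdot : Fin n → ℝ → ℝ) (w : Fin n → ℝ → ℝ)
    (x xdot : Fin (n + 1) → ℝ → ℝ)
    (hlam_distinct : ∀ t ∈ Set.Ioo p q, ∀ k l : Fin n, k ≠ l → lam k t ≠ lam l t)
    (hlam_ne_a : ∀ t ∈ Set.Ioo p q, ∀ k : Fin n, ∀ j : Fin (n + 1), lam k t ≠ a j)
    (hlam_ne_zero : ∀ t ∈ Set.Ioo p q, ∀ k : Fin n, lam k t ≠ 0)
    (hrho_pos : ∀ t ∈ Set.Ioo p q, ∀ i : Fin (n + 1),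
      0 < a i * (∏ k, (a i - lam k t)) / (∏ j ∈ univ.erase i, (a i - a j)))
    (hx : ∀ t : ℝ, ∀ i : Fin (n + 1), x i t =
      Real.sqrt (a i * (∏ k, (a i - lam k t)) / (∏ j ∈ univ.erase i, (a i - a j))))
    (hlam_deriv : ∀ t ∈ Set.Ioo p q, ∀ k : Fin n, HasDerivAt (lam k) (lamdot k t) t)
    (hx_deriv : ∀ t ∈ Set.Ioo p q, ∀ i : Fin (n + 1), HasDerivAt (x i) (xdot i t) t)
    (hw : ∀ t ∈ Set.Ioo p q, ∀ k : Fin n,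
      (w k t) ^ 2 = -(lam k t * (∏ i, (lam k t - a i)) * (∏ l, (lam k t - c l))))
    (hdubrovin : ∀ t ∈ Set.Ioo p q, ∀ k : Fin n,
      lamdot k t = -2 * w k t / (lam k t * ∏ j ∈ univ.erase k, (lam k t - lam j t))) :
    ∀ t ∈ Set.Ioo p q, ∑ i, (xdot i t) ^ 2 = 1 :=
  dubrovin_unit_speed_general n hn a ha_inj c p q lam lamdot w x xdot hlam_distinct hlam_ne_a
    hlam_ne_zero hrho_pos hx hlam_deriv hx_deriv hw hdubrovin
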